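/- Consider the parameter space Θ_2 = [(−100,0) ∪ (0,100)]^{6} × (−100,100) × [(−100,0) ∪ (0,100)]^{5} × (0.01,100)^{15} ⊂ ℝ^{27} and, for θ = (θ^{(1)}, ..., θ^{(27)}) ∈ Θ_2, the 12 × 12 matrix Σ_2(θ) defined as the SEM-implied covariance structure with Λ_1 = (1, θ^{(1)}, θ^{(2)}, θ^{(3)})^T ∈ ℝ^{4×1}, Λ_2 ∈ ℝ^{8×2} with first column (1, θ^{(4)}, θ^{(5)}, θ^{(6)}, 0, θ^{(7)}, 0, 0)^T and second column (0, 0, 0, 0, 1, θ^{(8)}, θ^{(9)}, θ^{(10)})^T, Γ = (θ^{(11)}, θ^{(12)})^T ∈ ℝ^{2×1}, Σ_ξξ = θ^{(13)} (a 1 × 1 matrix), Σ_δδ = diag(θ^{(14)}, θ^{(15)}, θ^{(16)}, θ^{(17)}), Σ_εε = diag(θ^{(18)}, ..., θ^{(25)}), and Σ_ζζ = diag(θ^{(26)}, θ^{(27)}). Let θ_{2,0} = (0.5, 0.8, 0.3, 1.3, 0.8, 0.5, 0, 0.9, 0.7, 1.1, −0.6, 0.9, 0.64, 0.36, 1.44,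 0.64, 0.49, 1.69, 0.25, 0.49, 0.36, 0.81, 0.64, 1.44, 1.21, 1.96, 0.36) ∈ Θ_2. Then for every θ_2 ∈ Θ_2, Σ_2(θ_2) = Σ_2(θ_{2,0}) implies θ_2 = θ_{2,0}. -/
import Mathlib


open Matrix

/-- The SEM-implied covariance structure: given loading matrices `L1 : p1 × k1`,
`L2 : p2 × k2`, `G : k2 × k1` (with `Ψ = I`, i.e. `B = 0`) and covariance matrices
`Sxx, Sdd, See, Szz`, it is the block matrix
`[[L1 Sxx L1ᵀ + Sdd, L1 Sxx Gᵀ L2ᵀ], [(L1 Sxx Gᵀ L2ᵀ)ᵀ, L2 (G Sxx Gᵀ + Szz) L2ᵀ + See]]`. -/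
noncomputable def semCov {p1 p2 k1 k2 : ℕ}
    (L1 : Matrix (Fin p1) (Fin k1) ℝ) (L2 : Matrix (Fin p2) (Fin k2) ℝ)
    (G : Matrix (Fin k2) (Fin k1) ℝ)
    (Sxx : Matrix (Fin k1) (Fin k1) ℝ) (Sdd : Matrix (Fin p1) (Fin p1) ℝ)
    (See : Matrix (Fin p2) (Fin p2) ℝ) (Szz : Matrix (Fin k2) (Fin k2) ℝ) :
    Matrix (Fin p1 ⊕ Fin p2) (Fin p1 ⊕ Fin p2) ℝ :=
  Matrix.fromBlocks (L1 * Sxx * L1ᵀ + Sdd) (L1 * Sxx * Gᵀ * L2ᵀ)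
    (L1 * Sxx * Gᵀ * L2ᵀ)ᵀ (L2 * (G * Sxx * Gᵀ + Szz) * L2ᵀ + See)

/-- The implied covariance structure of Model 2, with parameter
`θ = (θ^(1), …, θ^(27))` (0-indexed as `θ 0, …, θ 26`). -/
noncomputable def Sigma2 (θ : Fin 27 → ℝ) : Matrix (Fin 4 ⊕ Fin 8) (Fin 4 ⊕ Fin 8) ℝ :=
  semCov
    (Matrix.of fun i (_ : Fin 1) => ![1, θ 0, θ 1, θ 2] i)
    (Matrix.of fun (i : Fin 8) (j : Fin 2) =>
      ![![1, 0], ![θ 3, 0], ![θ 4, 0], ![θ 5, 0],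
        ![0, 1], ![θ 6, θ 7], ![0, θ 8], ![0, θ 9]] i j)
    (Matrix.of fun (i : Fin 2) (_ : Fin 1) => ![θ 10, θ 11] i)
    (Matrix.of fun (_ _ : Fin 1) => θ 12)
    (Matrix.diagonal ![θ 13, θ 14, θ 15, θ 16])
    (Matrix.diagonal ![θ 17, θ 18, θ 19, θ 20, θ 21, θ 22, θ 23, θ 24])
    (Matrix.diagonal ![θ 25, θ 26])

/-- The parameter space
`Θ₂ = [(−100,0) ∪ (0,100)]⁶ × (−100,100) × [(−100,0) ∪ (0,100)]⁵ × (0.01,100)^{15}`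
of Model 2. -/
def Theta2 : Set (Fin 27 → ℝ) :=
  {θ | (∀ i : Fin 27, (i : ℕ) < 6 →
          θ i ∈ Set.Ioo (-100 : ℝ) 0 ∪ Set.Ioo (0 : ℝ) 100) ∧
       θ 6 ∈ Set.Ioo (-100 : ℝ) 100 ∧
       (∀ i : Fin 27, 7 ≤ (i : ℕ) → (i : ℕ) < 12 →
          θ i ∈ Set.Ioo (-100 : ℝ) 0 ∪ Set.Ioo (0 : ℝ) 100) ∧
       (∀ i : Fin 27, 12 ≤ (i : ℕ) → θ i ∈ Set.Ioo (0.01 : ℝ) 100)}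

/-- The true parameter value `θ_{2,0}` of Model 2. -/
noncomputable def theta20 : Fin 27 → ℝ :=
  ![0.5, 0.8, 0.3, 1.3, 0.8, 0.5, 0, 0.9, 0.7, 1.1, -0.6, 0.9, 0.64, 0.36, 1.44,
    0.64, 0.49, 1.69, 0.25, 0.49, 0.36, 0.81, 0.64, 1.44, 1.21, 1.96, 0.36]
lemma fne4_02 : ((0:Fin 4) = 2) = False := by decide
lemma fne4_03 : ((0:Fin 4) = 3) = False := by decide
lemma fne4_12 : ((1:Fin 4) = 2) = False := by decide
lemma fne8_46 : ((4:Fin 8) = 6) = False := by decide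
lemma fne8_05 : ((0:Fin 8) = 5) = False := by decide
section AuxId
variable {α : Type*}
lemma cv2_1 (x : α) (u : Fin 1 → α) : Matrix.vecCons x u (1 : Fin 2) = u 0 := rfl
lemma cv3_1 (x : α) (u : Fin 2 → α) : Matrix.vecCons x u (1 : Fin 3) = u 0 := rfl
lemma cv3_2 (x : α) (u : Fin 2 → α) : Matrix.vecCons x u (2 : Fin 3) = u 1 := rfl
lemma cv4_1 (x : α) (u : Fin 3 → α) : Matrix.vecCons x u (1 : Fin 4) = u 0 := rfl
lemma cv4_2 (x : α) (u : Fin 3 → α) : Matrix.vecCons x u (2 : Fin 4) = u 1 := rfl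
lemma cv4_3 (x : α) (u : Fin 3 → α) : Matrix.vecCons x u (3 : Fin 4) = u 2 := rfl
lemma cv5_1 (x : α) (u : Fin 4 → α) : Matrix.vecCons x u (1 : Fin 5) = u 0 := rfl
lemma cv5_2 (x : α) (u : Fin 4 → α) : Matrix.vecCons x u (2 : Fin 5) = u 1 := rfl
lemma cv5_3 (x : α) (u : Fin 4 → α) : Matrix.vecCons x u (3 : Fin 5) = u 2 := rfl
lemma cv5_4 (x : α) (u : Fin 4 → α) : Matrix.vecCons x u (4 : Fin 5) = u 3 := rfl
lemma cv6_1 (x : α) (u : Fin 5 → α) : Matrix.vecCons x u (1 : Fin 6) = u 0 := rfl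
lemma cv6_2 (x : α) (u : Fin 5 → α) : Matrix.vecCons x u (2 : Fin 6) = u 1 := rfl
lemma cv6_3 (x : α) (u : Fin 5 → α) : Matrix.vecCons x u (3 : Fin 6) = u 2 := rfl
lemma cv6_4 (x : α) (u : Fin 5 → α) : Matrix.vecCons x u (4 : Fin 6) = u 3 := rfl
lemma cv6_5 (x : α) (u : Fin 5 → α) : Matrix.vecCons x u (5 : Fin 6) = u 4 := rfl
lemma cv7_1 (x : α) (u : Fin 6 → α) : Matrix.vecCons x u (1 : Fin 7) = u 0 := rfl
lemma cv7_2 (x : α) (u : Fin 6 → α) : Matrix.vecCons x u (2 : Fin 7) = u 1 := rfl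
lemma cv7_3 (x : α) (u : Fin 6 → α) : Matrix.vecCons x u (3 : Fin 7) = u 2 := rfl
lemma cv7_4 (x : α) (u : Fin 6 → α) : Matrix.vecCons x u (4 : Fin 7) = u 3 := rfl
lemma cv7_5 (x : α) (u : Fin 6 → α) : Matrix.vecCons x u (5 : Fin 7) = u 4 := rfl
lemma cv7_6 (x : α) (u : Fin 6 → α) : Matrix.vecCons x u (6 : Fin 7) = u 5 := rfl
lemma cv8_1 (x : α) (u : Fin 7 → α) : Matrix.vecCons x u (1 : Fin 8) = u 0 := rfl
lemma cv8_2 (x : α) (u : Fin 7 → α) : Matrix.vecCons x u (2 : Fin 8) = u 1 := rfl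
lemma cv8_3 (x : α) (u : Fin 7 → α) : Matrix.vecCons x u (3 : Fin 8) = u 2 := rfl
lemma cv8_4 (x : α) (u : Fin 7 → α) : Matrix.vecCons x u (4 : Fin 8) = u 3 := rfl
lemma cv8_5 (x : α) (u : Fin 7 → α) : Matrix.vecCons x u (5 : Fin 8) = u 4 := rfl
lemma cv8_6 (x : α) (u : Fin 7 → α) : Matrix.vecCons x u (6 : Fin 8) = u 5 := rfl
lemma cv8_7 (x : α) (u : Fin 7 → α) : Matrix.vecCons x u (7 : Fin 8) = u 6 := rfl
end AuxId
lemma t20_0 : theta20 0 = (0.5 : ℝ) := rfl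
lemma t20_1 : theta20 1 = (0.8 : ℝ) := rfl
lemma t20_2 : theta20 2 = (0.3 : ℝ) := rfl
lemma t20_3 : theta20 3 = (1.3 : ℝ) := rfl
lemma t20_4 : theta20 4 = (0.8 : ℝ) := rfl
lemma t20_5 : theta20 5 = (0.5 : ℝ) := rfl
lemma t20_6 : theta20 6 = (0 : ℝ) := rfl
lemma t20_7 : theta20 7 = (0.9 : ℝ) := rfl
lemma t20_8 : theta20 8 = (0.7 : ℝ) := rfl
lemma t20_9 : theta20 9 = (1.1 : ℝ) := rfl
lemma t20_10 : theta20 10 = (-0.6 : ℝ) := rfl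
lemma t20_11 : theta20 11 = (0.9 : ℝ) := rfl
lemma t20_12 : theta20 12 = (0.64 : ℝ) := rfl
lemma t20_13 : theta20 13 = (0.36 : ℝ) := rfl
lemma t20_14 : theta20 14 = (1.44 : ℝ) := rfl
lemma t20_15 : theta20 15 = (0.64 : ℝ) := rfl
lemma t20_16 : theta20 16 = (0.49 : ℝ) := rfl
lemma t20_17 : theta20 17 = (1.69 : ℝ) := rfl
lemma t20_18 : theta20 18 = (0.25 : ℝ) := rfl
lemma t20_19 : theta20 19 = (0.49 : ℝ) := rfl
lemma t20_20 : theta20 20 = (0.36 : ℝ) := rfl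
lemma t20_21 : theta20 21 = (0.81 : ℝ) := rfl
lemma t20_22 : theta20 22 = (0.64 : ℝ) := rfl
lemma t20_23 : theta20 23 = (1.44 : ℝ) := rfl
lemma t20_24 : theta20 24 = (1.21 : ℝ) := rfl
lemma t20_25 : theta20 25 = (1.96 : ℝ) := rfl
lemma t20_26 : theta20 26 = (0.36 : ℝ) := rfl

set_option maxHeartbeats 4000000 in
/-- Identifiability of Model 2: `θ_{2,0} ∈ Θ₂` and for every `θ₂ ∈ Θ₂`,
`Σ₂(θ₂) = Σ₂(θ_{2,0})` implies `θ₂ = θ_{2,0}`. -/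
theorem model2_identifiability :
    theta20 ∈ Theta2 ∧
      ∀ θ2 ∈ Theta2, Sigma2 θ2 = Sigma2 theta20 → θ2 = theta20 := by
  constructor
  · refine ⟨fun i hi => ?_, ?_, fun i h7 h12 => ?_, fun i h12 => ?_⟩
    · fin_cases i <;> simp_all <;> norm_num [t20_0, t20_1, t20_2, t20_3, t20_4, t20_5, t20_6, t20_7, t20_8, t20_9, t20_10, t20_11, t20_12, t20_13, t20_14, t20_15, t20_16, t20_17, t20_18, t20_19, t20_20, t20_21, t20_22, t20_23, t20_24, t20_25, t20_26]
    · norm_num [t20_6]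
    · fin_cases i <;> simp_all <;> norm_num [t20_0, t20_1, t20_2, t20_3, t20_4, t20_5, t20_6, t20_7, t20_8, t20_9, t20_10, t20_11, t20_12, t20_13, t20_14, t20_15, t20_16, t20_17, t20_18, t20_19, t20_20, t20_21, t20_22, t20_23, t20_24, t20_25, t20_26]
    · fin_cases i <;> simp_all <;> norm_num [t20_0, t20_1, t20_2, t20_3, t20_4, t20_5, t20_6, t20_7, t20_8, t20_9, t20_10, t20_11, t20_12, t20_13, t20_14, t20_15, t20_16, t20_17, t20_18, t20_19, t20_20, t20_21, t20_22, t20_23, t20_24, t20_25, t20_26]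
  · intro θ2 _ h
    have e01 := congrFun (congrFun h (Sum.inl 0)) (Sum.inl 1)
    have e02 := congrFun (congrFun h (Sum.inl 0)) (Sum.inl 2)
    have e03 := congrFun (congrFun h (Sum.inl 0)) (Sum.inl 3)
    have e12 := congrFun (congrFun h (Sum.inl 1)) (Sum.inl 2)
    have e00 := congrFun (congrFun h (Sum.inl 0)) (Sum.inl 0)
    have e11 := congrFun (congrFun h (Sum.inl 1)) (Sum.inl 1)
    have e22 := congrFun (congrFun h (Sum.inl 2)) (Sum.inl 2)
    have e33 := congrFun (congrFun h (Sum.inl 3)) (Sum.inl 3)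
    have f00 := congrFun (congrFun h (Sum.inl 0)) (Sum.inr 0)
    have f01 := congrFun (congrFun h (Sum.inl 0)) (Sum.inr 1)
    have f02 := congrFun (congrFun h (Sum.inl 0)) (Sum.inr 2)
    have f03 := congrFun (congrFun h (Sum.inl 0)) (Sum.inr 3)
    have f04 := congrFun (congrFun h (Sum.inl 0)) (Sum.inr 4)
    have f05 := congrFun (congrFun h (Sum.inl 0)) (Sum.inr 5)
    have f06 := congrFun (congrFun h (Sum.inl 0)) (Sum.inr 6)
    have f07 := congrFun (congrFun h (Sum.inl 0)) (Sum.inr 7)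
    have g01 := congrFun (congrFun h (Sum.inr 0)) (Sum.inr 1)
    have g46 := congrFun (congrFun h (Sum.inr 4)) (Sum.inr 6)
    have g05 := congrFun (congrFun h (Sum.inr 0)) (Sum.inr 5)
    have g00 := congrFun (congrFun h (Sum.inr 0)) (Sum.inr 0)
    have g11 := congrFun (congrFun h (Sum.inr 1)) (Sum.inr 1)
    have g22 := congrFun (congrFun h (Sum.inr 2)) (Sum.inr 2)
    have g33 := congrFun (congrFun h (Sum.inr 3)) (Sum.inr 3)
    have g44 := congrFun (congrFun h (Sum.inr 4)) (Sum.inr 4)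
    have g55 := congrFun (congrFun h (Sum.inr 5)) (Sum.inr 5)
    have g66 := congrFun (congrFun h (Sum.inr 6)) (Sum.inr 6)
    have g77 := congrFun (congrFun h (Sum.inr 7)) (Sum.inr 7)
    simp only [Sigma2, semCov, Matrix.mul_apply, Matrix.add_apply, Matrix.transpose_apply,
      Matrix.of_apply, Matrix.diagonal_apply, Matrix.fromBlocks_apply₁₁, Matrix.fromBlocks_apply₁₂,
      Matrix.fromBlocks_apply₂₁, Matrix.fromBlocks_apply₂₂, Fin.sum_univ_succ, Fin.sum_univ_zero,
      Matrix.cons_val_zero, cv2_1, cv3_1, cv3_2, cv4_1, cv4_2, cv4_3, cv5_1, cv5_2, cv5_3, cv5_4, cv6_1, cv6_2, cv6_3, cv6_4, cv6_5, cv7_1, cv7_2, cv7_3, cv7_4, cv7_5, cv7_6, cv8_1, cv8_2, cv8_3, cv8_4, cv8_5, cv8_6, cv8_7, t20_0, t20_1, t20_2, t20_3, t20_4, t20_5, t20_6, t20_7, t20_8, t20_9, t20_10, t20_11, t20_12, t20_13, t20_14, t20_15, t20_16, t20_17, t20_18, t20_19, t20_20, t20_21, t20_22, t20_23, t20_24,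 t20_25, t20_26] at e01 e02 e03 e12 e00 e11 e22 e33 f00 f01 f02 f03 f04 f05 f06 f07 g01 g46 g05 g00 g11 g22 g33 g44 g55 g66 g77
    norm_num [fne4_02, fne4_03, fne4_12, fne8_46, fne8_05] at e01 e02 e03 e12 e00 e11 e22 e33 f00 f01 f02 f03 f04 f05 f06 f07 g01 g46 g05 g00 g11 g22 g33 g44 g55 g66 g77
    have h12 : θ2 12 = 16/25 := by
      linear_combination (-125/32 : ℝ) * (θ2 12 * e12 - θ2 12 * θ2 1 * e01 - (8/25) * e02)
    rw [h12] at e01 e02 e03 e00 e11 e22 e33 f00 f01 f02 f03 f04 f05 f06 f07 g01 g46 g05 g00 g11 g22 g33 g44 g55 g66 g77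
    have h0 : θ2 0 = 1/2 := by linarith only [e01]
    have h1 : θ2 1 = 4/5 := by linarith only [e02]
    have h2 : θ2 2 = 3/10 := by linarith only [e03]
    have h13 : θ2 13 = 9/25 := by linarith only [e00]
    rw [h0] at e11; rw [h1] at e22; rw [h2] at e33
    have h14 : θ2 14 = 36/25 := by linarith only [e11]
    have h15 : θ2 15 = 16/25 := by linarith only [e22]
    have h16 : θ2 16 = 49/100 := by linarith only [e33]
    have h10 : θ2 10 = -(3/5) := by linarith only [f00]
    have h11' : θ2 11 = 9/10 := by linarith only [f04]
    rw [h10] at f01 f02 f03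
    have h3 : θ2 3 = 13/10 := by linarith only [f01]
    have h4 : θ2 4 = 4/5 := by linarith only [f02]
    have h5 : θ2 5 = 1/2 := by linarith only [f03]
    rw [h11'] at f06 f07
    have h8 : θ2 8 = 7/10 := by linarith only [f06]
    have h9 : θ2 9 = 11/10 := by linarith only [f07]
    rw [h10, h3] at g01
    have h25 : θ2 25 = 49/25 := by linarith only [g01]
    rw [h11', h8] at g46
    have h26 : θ2 26 = 9/25 := by linarith only [g46]
    rw [h10, h11'] at f05
    rw [h10, h11', h25] at g05
    have h6 : θ2 6 = 0 := by linarith only [f05, g05]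
    have h7' : θ2 7 = 9/10 := by linarith only [f05, g05]
    rw [h10, h25] at g00
    have h17 : θ2 17 = 169/100 := by linarith only [g00]
    rw [h10, h25, h3] at g11
    have h18 : θ2 18 = 1/4 := by linarith only [g11]
    rw [h10, h25, h4] at g22
    have h19 : θ2 19 = 49/100 := by linarith only [g22]
    rw [h10, h25, h5] at g33
    have h20 : θ2 20 = 9/25 := by linarith only [g33]
    rw [h11', h26] at g44
    have h21 : θ2 21 = 81/100 := by linarith only [g44]
    rw [h10, h11', h25, h26, h6, h7'] at g55
    have h22 : θ2 22 = 16/25 := by linarith only [g55]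
    rw [h11', h26, h8] at g66
    have h23 : θ2 23 = 36/25 := by linarith only [g66]
    rw [h11', h26, h9] at g77
    have h24 : θ2 24 = 121/100 := by linarith only [g77]
    have H0 : θ2 0 = theta20 0 := by rw [t20_0]; linarith only [h0]
    have H1 : θ2 1 = theta20 1 := by rw [t20_1]; linarith only [h1]
    have H2 : θ2 2 = theta20 2 := by rw [t20_2]; linarith only [h2]
    have H3 : θ2 3 = theta20 3 := by rw [t20_3]; linarith only [h3]
    have H4 : θ2 4 = theta20 4 := by rw [t20_4]; linarith only [h4]
    have H5 : θ2 5 = theta20 5 := by rw [t20_5]; linarith only [h5]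
    have H6 : θ2 6 = theta20 6 := by rw [t20_6]; linarith only [h6]
    have H7 : θ2 7 = theta20 7 := by rw [t20_7]; linarith only [h7']
    have H8 : θ2 8 = theta20 8 := by rw [t20_8]; linarith only [h8]
    have H9 : θ2 9 = theta20 9 := by rw [t20_9]; linarith only [h9]
    have H10 : θ2 10 = theta20 10 := by rw [t20_10]; linarith only [h10]
    have H11 : θ2 11 = theta20 11 := by rw [t20_11]; linarith only [h11']
    have H12 : θ2 12 = theta20 12 := by rw [t20_12]; linarith only [h12]
    have H13 : θ2 13 = theta20 13 := by rw [t20_13]; linarith only [h13]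
    have H14 : θ2 14 = theta20 14 := by rw [t20_14]; linarith only [h14]
    have H15 : θ2 15 = theta20 15 := by rw [t20_15]; linarith only [h15]
    have H16 : θ2 16 = theta20 16 := by rw [t20_16]; linarith only [h16]
    have H17 : θ2 17 = theta20 17 := by rw [t20_17]; linarith only [h17]
    have H18 : θ2 18 = theta20 18 := by rw [t20_18]; linarith only [h18]
    have H19 : θ2 19 = theta20 19 := by rw [t20_19]; linarith only [h19]
    have H20 : θ2 20 = theta20 20 := by rw [t20_20]; linarith only [h20]
    have H21 : θ2 21 = theta20 21 := by rw [t20_21]; linarith only [h21]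
    have H22 : θ2 22 = theta20 22 := by rw [t20_22]; linarith only [h22]
    have H23 : θ2 23 = theta20 23 := by rw [t20_23]; linarith only [h23]
    have H24 : θ2 24 = theta20 24 := by rw [t20_24]; linarith only [h24]
    have H25 : θ2 25 = theta20 25 := by rw [t20_25]; linarith only [h25]
    have H26 : θ2 26 = theta20 26 := by rw [t20_26]; linarith only [h26]
    funext k
    fin_cases k <;> first
      | exact H0
      | exact H1
      | exact H2
      | exact H3
      | exact H4
      | exact H5
      | exact H6
      | exact H7
      | exact H8
      | exact H9
      | exact H10
      | exact H11
      | exact H12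
      | exact H13
      | exact H14
      | exact H15
      | exact H16
      | exact H17
      | exact H18
      | exact H19
      | exact H20
      | exact H21
      | exact H22
      | exact H23
      | exact H24
      | exact H25
      | exact H26
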